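/- There exist infinitely many primes p such that p - 2^i is composite or nonpositive and p + 2^i is composite, for every nonnegative integer i with 2^i < p. -/

import Mathlib

/-!
Cohen–Selfridge covering argument. Fix a modulus `N`, a residue `M` coprime to `N` and a period
`L` with `2 ^ L ≡ 1 [MOD N]`, so that `2 ^ i` modulo `N` only depends on `i % L`. If a finite list
`S` of divisors of `N` covers every `j < L` twice — some `q ∈ S` divides `M + 2 ^ j`, and some
`q ∈ S` divides `M - 2 ^ j` — then for every `p ≡ M [MOD N]` both `p + 2 ^ i` and `p - 2 ^ i` have
a proper divisor `q ∈ S`, unless `p - 2 ^ i = q` itself, which is excluded separately. Dirichlet's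
theorem supplies infinitely many primes `p ≡ M [MOD N]`.
-/

/-- A natural number is composite if it exceeds `1` and is not prime. -/
def Composite (n : ℕ) : Prop := 1 < n ∧ ¬ n.Prime

theorem Nat.ModEq.pow_modEq_pow_mod {a L N : ℕ} (h : a ^ L ≡ 1 [MOD N]) (i : ℕ) :
    a ^ i ≡ a ^ (i % L) [MOD N] := by
  conv_lhs => rw [← Nat.div_add_mod i L, pow_add, pow_mul]
  simpa using (h.pow (i / L)).mul_right (a ^ (i % L))

theorem Composite.of_dvd {q n : ℕ} (hq : 1 < q) (hqn : q < n) (hdvd : q ∣ n) : Composite n :=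
  ⟨hq.trans hqn, Nat.not_prime_of_dvd_of_lt hdvd hq hqn⟩

structure TwoSidedCovering (M N L : ℕ) (S : List ℕ) : Prop where
  period_pos : 0 < L
  pow_period : 2 ^ L ≡ 1 [MOD N]
  one_lt : ∀ q ∈ S, 1 < q
  dvd_modulus : ∀ q ∈ S, q ∣ N
  covers_add : ∀ j < L, ∃ q ∈ S, q ∣ M + 2 ^ j
  covers_sub : ∀ j < L, ∃ q ∈ S, M ≡ 2 ^ j [MOD q]
  not_modEq_add : ∀ j < L, ∀ q ∈ S, ¬ q + 2 ^ j ≡ M [MOD N]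

namespace TwoSidedCovering

variable {M N L p i : ℕ} {S : List ℕ}

theorem modulus_ne_zero (hC : TwoSidedCovering M N L S) : N ≠ 0 := by
  rintro rfl
  have := hC.pow_period
  simp [Nat.modEq_zero_iff, hC.period_pos.ne'] at this

theorem composite_add (hC : TwoSidedCovering M N L S) (hpM : p ≡ M [MOD N]) (hpN : N < p) :
    Composite (p + 2 ^ i) := by
  have hiL := hC.pow_period.pow_modEq_pow_mod i
  obtain ⟨q, hqS, hq⟩ := hC.covers_add (i % L) (Nat.mod_lt i hC.period_pos)
  have hqN := hC.dvd_modulus q hqS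
  have hdvd : q ∣ p + 2 ^ i := (hpM.add hiL).dvd_iff hqN |>.mpr hq
  have hqp : q < p + 2 ^ i :=
    ((Nat.le_of_dvd (Nat.pos_of_ne_zero hC.modulus_ne_zero) hqN).trans_lt hpN).trans_le
      (Nat.le_add_right p _)
  exact .of_dvd (hC.one_lt q hqS) hqp hdvd

theorem composite_sub (hC : TwoSidedCovering M N L S) (hpM : p ≡ M [MOD N]) (hi : 2 ^ i < p) :
    Composite (p - 2 ^ i) := by
  have hiL := hC.pow_period.pow_modEq_pow_mod i
  have hjL := Nat.mod_lt i hC.period_pos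
  obtain ⟨q, hqS, hq⟩ := hC.covers_sub (i % L) hjL
  have hqN := hC.dvd_modulus q hqS
  have hdvd : q ∣ p - 2 ^ i :=
    (Nat.modEq_iff_dvd' hi.le).mp ((hpM.of_dvd hqN).trans (hq.trans (hiL.of_dvd hqN).symm)).symm
  have hne : p - 2 ^ i ≠ q := fun heq => by
    refine hC.not_modEq_add (i % L) hjL q hqS ((hiL.add_left q).symm.trans ?_)
    rwa [← heq, Nat.sub_add_cancel hi.le]
  have hqp : q < p - 2 ^ i := lt_of_le_of_ne (Nat.le_of_dvd (by omega) hdvd) hne.symm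
  exact .of_dvd (hC.one_lt q hqS) hqp hdvd

theorem infinite_setOf_prime (hC : TwoSidedCovering M N L S) (hMN : M.Coprime N) :
    {p : ℕ | p.Prime ∧ ∀ i : ℕ, 2 ^ i < p →
      Composite (p - 2 ^ i) ∧ Composite (p + 2 ^ i)}.Infinite := by
  refine Set.infinite_of_forall_exists_gt fun n => ?_
  obtain ⟨p, hp, hpp, hpM⟩ :=
    Nat.forall_exists_prime_gt_and_modEq (max n N) hC.modulus_ne_zero hMN
  exact ⟨p, ⟨hpp, fun i hi => ⟨hC.composite_sub hpM hi, hC.composite_add hpM (by omega)⟩⟩,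
    by omega⟩

end TwoSidedCovering

theorem twoSidedCovering_cohenSelfridge :
    TwoSidedCovering 47867742232066880047611079 33241542480794255062005345795 720
      [3, 5, 7, 11, 13, 17, 19, 31, 37, 41, 61, 73, 97, 109, 151, 241, 257, 331] :=
  ⟨by decide, by decide +kernel, by decide, by decide, by decide +kernel, by decide +kernel,
    by decide +kernel⟩

/-- There are infinitely many primes `p` such that for every `i` with `2^i < p`,
both `p - 2^i` and `p + 2^i` are composite. -/
theorem stmt_10 :
    {p : ℕ | p.Prime ∧ ∀ i : ℕ, 2 ^ i < p →
      Composite (p - 2 ^ i) ∧ Composite (p + 2 ^ i)}.Infinite :=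
  twoSidedCovering_cohenSelfridge.infinite_setOf_prime (by decide)
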